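/- Let X be a bounded-degree graph, φ: X → G an injective (a,b)-rough isometry into a Cayley graph (G,S) of polynomial volume growth, and assume: (i) harmonic functions u on X satisfy u(p)² ≤ (C₁/|B_p^X(R)|)·Σ_{x∈B_p^X(R)} u(x)² for R ≥ 1; (ii) the volume comparison |B_p^X(R)| ≥ C₂|B_y^G(C₁'R)| whenever d^S(φ(p),y) ≤ b and R ≥ R₁; (iii) the volume doubling property on G. Then there exist constants C, R₀ such that for every harmonic u on X, the extended function ũ on G (defined by ũ = u∘φ⁻¹ on φ(X) and by averaging u over W_y = φ⁻¹(φ(X)∩B_b^G(y)) elsewhere) satisfies ũ(y)² ≤ (C/|B_y^G(R)|)·Σ_{x∈B_y^G(R)} ũ(x)² for all y ∈ G and R ≥ R₀. -/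

import Mathlib

def IsRoughIsometryWith {X Y : Type*} (dX : X → X → ℝ) (dY : Y → Y → ℝ)
    (a b : ℝ) (φ : X → Y) : Prop :=
  (∀ x y : X, a⁻¹ * dX x y - b ≤ dY (φ x) (φ y) ∧
      dY (φ x) (φ y) ≤ a * dX x y + b) ∧
  ∀ z : Y, ∃ x : X, dY z (φ x) ≤ b

noncomputable def wordDist {G : Type*} [Group G] (S : Set G) (x y : G) : ℕ :=
  sInf {n | ∃ l : List G, l.length = n ∧ (∀ g ∈ l, g ∈ S) ∧ x * l.prod = y}

noncomputable def wball {G : Type*} [Group G] (S : Set G) (p : G) (n : ℕ) : Set G :=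
  {x : G | wordDist S p x ≤ n}

noncomputable def growth {G : Type*} [Group G] (S : Set G) (n : ℕ) : ℕ :=
  (wball S 1 n).ncard

/-- `u` is harmonic on the graph `X`. -/
def IsHarmonicGraph {V : Type*} (X : SimpleGraph V) (u : V → ℝ) : Prop :=
  ∀ v : V, ∑ᶠ w ∈ X.neighborSet v, (u w - u v) = 0

noncomputable def Wset {V G : Type*} [Group G] (φ : V → G) (S : Set G) (b : ℝ) (y : G) :
    Set V :=
  φ ⁻¹' (Set.range φ ∩ {z : G | (wordDist S y z : ℝ) ≤ b})

open scoped Classical in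
/-- The extension `ũ` of `u : V → ℝ` to `G`. -/
noncomputable def extendFun {V G : Type*} [Group G] (φ : V → G) (S : Set G) (b : ℝ)
    (u : V → ℝ) : G → ℝ := fun y =>
  if h : ∃ x, φ x = y then u h.choose
  else ((Wset φ S b y).ncard : ℝ)⁻¹ * ∑ᶠ x ∈ Wset φ S b y, u x

/-! Every `ũ y` is controlled by `u p` at a point with `d(y, φ p) ≤ b`: either `y = φ p`, or
`ũ y` is an average of `u` over `W_y` and so is at most `max |u|` there in absolute value. Apply
the mean value inequality on `X` at `p` with radius `r ≈ R / 2a`. The rough isometry maps the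
`r`-ball around `p` injectively into the `R`-ball around `y`, which bounds the sum of `u²` by the
sum of `ũ²`, and volume comparison followed by a fixed number of doublings bounds
`|B_G(y, R)|` by a constant times `|B_X(p, r)|`. -/

open Set

section WordMetric

variable {G : Type*} [Group G] {S : Set G}

lemma submonoid_closure_eq_top_of_inv_mem (hinv : ∀ s ∈ S, s⁻¹ ∈ S)
    (hgen : Subgroup.closure S = ⊤) : Submonoid.closure S = ⊤ := by
  have hsymm : S ∪ S⁻¹ = S :=
    union_eq_self_of_subset_right fun g hg => by simpa using hinv _ hg
  rw [← hsymm, ← Subgroup.closure_toSubmonoid, hgen, Subgroup.top_toSubmonoid]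

lemma exists_word (hS : Submonoid.closure S = ⊤) (x y : G) :
    ∃ l : List G, (∀ g ∈ l, g ∈ S) ∧ x * l.prod = y := by
  obtain ⟨l, hl, hprod⟩ :=
    Submonoid.exists_list_of_mem_closure (hS ▸ Submonoid.mem_top (x⁻¹ * y))
  exact ⟨l, hl, by rw [hprod, mul_inv_cancel_left]⟩

lemma exists_word_length_eq_wordDist (hS : Submonoid.closure S = ⊤) (x y : G) :
    ∃ l : List G, l.length = wordDist S x y ∧ (∀ g ∈ l, g ∈ S) ∧ x * l.prod = y := by
  obtain ⟨l, hl, hprod⟩ := exists_word hS x y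
  exact Nat.sInf_mem (⟨l.length, l, rfl, hl, hprod⟩ :
    {n | ∃ l : List G, l.length = n ∧ (∀ g ∈ l, g ∈ S) ∧ x * l.prod = y}.Nonempty)

lemma wordDist_le_length {x y : G} {l : List G} (hl : ∀ g ∈ l, g ∈ S)
    (hprod : x * l.prod = y) : wordDist S x y ≤ l.length :=
  Nat.sInf_le ⟨l, rfl, hl, hprod⟩

lemma wordDist_self (x : G) : wordDist S x x = 0 :=
  Nat.le_zero.mp (wordDist_le_length (l := []) (by simp) (by simp))

lemma wordDist_triangle (hS : Submonoid.closure S = ⊤) (x y z : G) :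
    wordDist S x z ≤ wordDist S x y + wordDist S y z := by
  obtain ⟨l₁, hlen₁, hl₁, hprod₁⟩ := exists_word_length_eq_wordDist hS x y
  obtain ⟨l₂, hlen₂, hl₂, hprod₂⟩ := exists_word_length_eq_wordDist hS y z
  calc wordDist S x z ≤ (l₁ ++ l₂).length :=
        wordDist_le_length (fun g hg => (List.mem_append.mp hg).elim (hl₁ g) (hl₂ g))
          (by rw [List.prod_append, ← mul_assoc, hprod₁, hprod₂])
    _ = wordDist S x y + wordDist S y z := by rw [List.length_append, hlen₁, hlen₂]

lemma exists_reverse_word (hinv : ∀ s ∈ S, s⁻¹ ∈ S) {x y : G} {l : List G}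
    (hl : ∀ g ∈ l, g ∈ S) (hprod : x * l.prod = y) :
    ∃ l' : List G, l'.length = l.length ∧ (∀ g ∈ l', g ∈ S) ∧ y * l'.prod = x := by
  refine ⟨(l.map (·⁻¹)).reverse, by simp, fun g hg => ?_, ?_⟩
  · obtain ⟨h, hh, rfl⟩ := List.mem_map.mp (List.mem_reverse.mp hg)
    exact hinv h (hl h hh)
  · rw [← List.prod_inv_reverse, ← hprod, mul_inv_cancel_right]

lemma wordDist_comm (hinv : ∀ s ∈ S, s⁻¹ ∈ S) (x y : G) :
    wordDist S x y = wordDist S y x := by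
  unfold wordDist
  congr 1
  ext n
  constructor <;>
  · rintro ⟨l, rfl, hl, hprod⟩
    exact exists_reverse_word hinv hl hprod

lemma wball_finite (hS : Submonoid.closure S = ⊤) (hfin : S.Finite) (y : G) (n : ℕ) :
    (wball S y n).Finite := by
  have := hfin.to_subtype
  refine ((List.finite_length_le S n).image
    fun l : List S => y * (l.map Subtype.val).prod).subset fun z hz => ?_
  obtain ⟨l, hlen, hl, hprod⟩ := exists_word_length_eq_wordDist hS y z
  refine ⟨l.pmap Subtype.mk hl, by rw [mem_ofPred_eq, List.length_pmap, hlen]; exact hz, ?_⟩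
  simpa [List.map_pmap] using hprod

lemma mem_wball_self (y : G) (n : ℕ) : y ∈ wball S y n := by
  simp [wball, wordDist_self]

lemma wball_mono (y : G) {m n : ℕ} (h : m ≤ n) : wball S y m ⊆ wball S y n :=
  fun _ hz => le_trans hz h

lemma ncard_wball_pos (hS : Submonoid.closure S = ⊤) (hfin : S.Finite) (y : G) (n : ℕ) :
    0 < (wball S y n).ncard :=
  (ncard_pos (wball_finite hS hfin y n)).mpr ⟨y, mem_wball_self y n⟩

lemma ncard_wball_two_pow_mul_le {Cd : ℝ} (hCd : 0 ≤ Cd)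
    (hdoubling : ∀ (y : G) (n : ℕ), 1 ≤ n →
      ((wball S y (2 * n)).ncard : ℝ) ≤ Cd * (wball S y n).ncard)
    (y : G) (k : ℕ) {m : ℕ} (hm : 1 ≤ m) :
    ((wball S y (2 ^ k * m)).ncard : ℝ) ≤ Cd ^ k * (wball S y m).ncard := by
  induction k with
  | zero => simp
  | succ k ih =>
    calc ((wball S y (2 ^ (k + 1) * m)).ncard : ℝ)
        = (wball S y (2 * (2 ^ k * m))).ncard := by rw [pow_succ', mul_assoc]
      _ ≤ Cd * (wball S y (2 ^ k * m)).ncard :=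
        hdoubling y _ (one_le_mul (Nat.one_le_two_pow) hm)
      _ ≤ Cd * (Cd ^ k * (wball S y m).ncard) := by gcongr
      _ = Cd ^ (k + 1) * (wball S y m).ncard := by ring

lemma ncard_wball_le_pow_mul (hS : Submonoid.closure S = ⊤) (hfin : S.Finite) {Cd : ℝ}
    (hCd : 0 ≤ Cd)
    (hdoubling : ∀ (y : G) (n : ℕ), 1 ≤ n →
      ((wball S y (2 * n)).ncard : ℝ) ≤ Cd * (wball S y n).ncard)
    (y : G) {k m n : ℕ} (hm : 1 ≤ m) (hn : n ≤ 2 ^ k * m) :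
    ((wball S y n).ncard : ℝ) ≤ Cd ^ k * (wball S y m).ncard :=
  le_trans (mod_cast ncard_le_ncard (wball_mono y hn) (wball_finite hS hfin y _))
    (ncard_wball_two_pow_mul_le hCd hdoubling y k hm)

end WordMetric

lemma Finset.exists_sq_average_le_sq {ι : Type*} {s : Finset ι} (hs : s.Nonempty)
    (f : ι → ℝ) : ∃ p ∈ s, ((s.card : ℝ)⁻¹ * ∑ x ∈ s, f x) ^ 2 ≤ f p ^ 2 := by
  obtain ⟨p, hp, hmax⟩ := s.exists_max_image (fun x => |f x|) hs
  refine ⟨p, hp, sq_le_sq.mpr ?_⟩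
  have hcard : (0 : ℝ) < s.card := mod_cast hs.card_pos
  rw [abs_mul, abs_inv, Nat.abs_cast, inv_mul_le_iff₀ hcard]
  calc |∑ x ∈ s, f x| ≤ ∑ x ∈ s, |f x| := Finset.abs_sum_le_sum_abs f s
    _ ≤ ∑ _x ∈ s, |f p| := Finset.sum_le_sum hmax
    _ = s.card * |f p| := by rw [Finset.sum_const, nsmul_eq_mul]

lemma Set.Finite.exists_sq_average_le_sq {ι : Type*} {s : Set ι} (hs : s.Finite)
    (hne : s.Nonempty) (f : ι → ℝ) :
    ∃ p ∈ s, ((s.ncard : ℝ)⁻¹ * ∑ᶠ x ∈ s, f x) ^ 2 ≤ f p ^ 2 := by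
  simpa [ncard_eq_toFinset_card _ hs, finsum_mem_eq_finite_toFinset_sum _ hs] using
    Finset.exists_sq_average_le_sq (hs.toFinset_nonempty.mpr hne) f

lemma finsum_mem_le_finsum_mem_of_subset {α M : Type*} [AddCommMonoid M] [PartialOrder M]
    [IsOrderedAddMonoid M] {f : α → M} {s t : Set α} (hst : s ⊆ t) (ht : t.Finite)
    (hf : ∀ x ∈ t, 0 ≤ f x) : ∑ᶠ x ∈ s, f x ≤ ∑ᶠ x ∈ t, f x := by
  rw [finsum_mem_eq_finite_toFinset_sum f (ht.subset hst),
    finsum_mem_eq_finite_toFinset_sum f ht]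
  exact Finset.sum_le_sum_of_subset_of_nonneg (Finite.toFinset_subset_toFinset.mpr hst)
    fun x hx _ => hf x (ht.mem_toFinset.mp hx)

section Extension

variable {V G : Type*} [Group G] {S : Set G} {φ : V → G} {b : ℝ}

lemma extendFun_apply_of_injective (hinj : Function.Injective φ) (u : V → ℝ) (x : V) :
    extendFun φ S b u (φ x) = u x := by
  have h : ∃ x', φ x' = φ x := ⟨x, rfl⟩
  rw [extendFun, dif_pos h, hinj h.choose_spec]

lemma mem_Wset_iff {y : G} {x : V} : x ∈ Wset φ S b y ↔ (wordDist S y (φ x) : ℝ) ≤ b := by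
  simp [Wset]

lemma Wset_finite (hS : Submonoid.closure S = ⊤) (hfin : S.Finite)
    (hinj : Function.Injective φ) (y : G) : (Wset φ S b y).Finite :=
  ((wball_finite hS hfin y ⌈b⌉₊).preimage hinj.injOn).subset fun x hx => by
    have : (wordDist S y (φ x) : ℝ) ≤ ⌈b⌉₊ := (mem_Wset_iff.mp hx).trans (Nat.le_ceil b)
    exact_mod_cast this

lemma exists_sq_extendFun_le (hS : Submonoid.closure S = ⊤) (hfin : S.Finite)
    (hinj : Function.Injective φ) (hb : 0 ≤ b)
    (hnet : ∀ z : G, ∃ x : V, (wordDist S z (φ x) : ℝ) ≤ b) (u : V → ℝ) (y : G) :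
    ∃ p : V, (wordDist S y (φ p) : ℝ) ≤ b ∧ extendFun φ S b u y ^ 2 ≤ u p ^ 2 := by
  by_cases hy : ∃ x, φ x = y
  · obtain ⟨p, rfl⟩ := hy
    refine ⟨p, by simpa [wordDist_self] using hb, ?_⟩
    rw [extendFun_apply_of_injective hinj]
  · obtain ⟨x, hx⟩ := hnet y
    obtain ⟨p, hp, hup⟩ :=
      (Wset_finite hS hfin hinj y).exists_sq_average_le_sq ⟨x, mem_Wset_iff.mpr hx⟩ u
    exact ⟨p, mem_Wset_iff.mp hp, by rwa [extendFun, dif_neg hy]⟩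

lemma finsum_mem_sq_le_finsum_mem_sq_extendFun (hinj : Function.Injective φ) (u : V → ℝ)
    {s : Set V} {t : Set G} (hst : MapsTo φ s t) (ht : t.Finite) :
    ∑ᶠ x ∈ s, u x ^ 2 ≤ ∑ᶠ z ∈ t, extendFun φ S b u z ^ 2 :=
  calc ∑ᶠ x ∈ s, u x ^ 2 = ∑ᶠ x ∈ s, extendFun φ S b u (φ x) ^ 2 := by
        simp only [extendFun_apply_of_injective hinj]
    _ = ∑ᶠ z ∈ φ '' s, extendFun φ S b u z ^ 2 :=
      (finsum_mem_image (f := fun z => extendFun φ S b u z ^ 2) hinj.injOn).symm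
    _ ≤ ∑ᶠ z ∈ t, extendFun φ S b u z ^ 2 :=
      finsum_mem_le_finsum_mem_of_subset hst.image_subset ht fun _ _ => sq_nonneg _

lemma mapsTo_ball_wball (hS : Submonoid.closure S = ⊤) {d : V → V → ℕ} {a : ℝ} (ha : 0 ≤ a)
    (hφ : ∀ x x' : V, (wordDist S (φ x) (φ x') : ℝ) ≤ a * d x x' + b) {p : V} {y : G}
    {r R : ℕ} (hR : (wordDist S y (φ p) : ℝ) + (a * r + b) ≤ R) :
    MapsTo φ {x | d p x ≤ r} (wball S y R) := fun x hx => by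
  have hpx : (wordDist S (φ p) (φ x) : ℝ) ≤ a * r + b :=
    (hφ p x).trans (by gcongr; exact_mod_cast hx)
  have htri : (wordDist S y (φ x) : ℝ) ≤ wordDist S y (φ p) + wordDist S (φ p) (φ x) :=
    mod_cast wordDist_triangle hS y (φ p) (φ x)
  have hxR : (wordDist S y (φ x) : ℝ) ≤ R := by linarith
  exact_mod_cast hxR

end Extension

/-- With `r = ⌊R / 2a⌋` the rough isometry maps the `r`-ball of `X` into the `R`-ball of `G`,
and `⌊c r⌋ ≈ c R / 2a`, so `k` doublings with `4a / c < 2 ^ k` lead from `⌊c r⌋` back up to `R`. -/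
lemma exists_radius_scale {a b c : ℝ} (ha : 0 < a) (hb : 0 ≤ b) (hc : 0 < c) (R₁ : ℕ) :
    ∃ k R₀ : ℕ, 1 ≤ R₀ ∧ ∀ R : ℕ, R₀ ≤ R → ∃ r : ℕ, R₁ ≤ r ∧ 1 ≤ r ∧
      a * r + 2 * b ≤ R ∧ 1 ≤ ⌊c * r⌋₊ ∧ R ≤ 2 ^ k * ⌊c * r⌋₊ := by
  obtain ⟨k, hk⟩ := pow_unbounded_of_one_lt (4 * a / c) (one_lt_two (α := ℝ))
  refine ⟨k, ⌈2 * a * (R₁ + 1) + 4 * b + 4 * a * (c + 1) / c⌉₊ + 1, le_add_self,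
    fun R hR => ?_⟩
  have hR₀ := Nat.lt_of_ceil_lt hR
  have hR₁_nonneg : 0 ≤ 2 * a * (R₁ + 1) := by positivity
  have hc_nonneg : 0 ≤ 4 * a * (c + 1) / c := by positivity
  have hkc : 4 * a < c * 2 ^ k := by rw [div_lt_iff₀ hc] at hk; linarith
  have hcR : 4 * a * (c + 1) < c * R := by
    have : 4 * a * (c + 1) / c < R := by linarith
    rw [div_lt_iff₀ hc] at this; linarith
  set r := ⌊(R : ℝ) / (2 * a)⌋₊
  have hr_le : 2 * a * r ≤ R := by
    have := Nat.floor_le (a := (R : ℝ) / (2 * a)) (by positivity)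
    rw [le_div_iff₀ (by positivity)] at this
    linarith
  have hr_gt : R < 2 * a * (r + 1) := by
    have := Nat.lt_floor_add_one ((R : ℝ) / (2 * a))
    rwa [div_lt_iff₀ (by positivity), mul_comm] at this
  set m := ⌊c * r⌋₊
  have hm_gt : 4 * a * (c * r - 1) < 4 * a * m :=
    mul_lt_mul_of_pos_left (Nat.sub_one_lt_floor _) (by positivity)
  have hcRm : c * R < 4 * a * m := by nlinarith
  have hm_pos : 0 < m := by
    have : (0 : ℝ) < 4 * a * m := by nlinarith
    exact_mod_cast pos_of_mul_pos_right this (by positivity)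
  refine ⟨r, ?_, Nat.pos_of_ne_zero fun h => by simp [m, h] at hm_pos, ?_, hm_pos, ?_⟩
  · have : (R₁ : ℝ) < r + 1 := by nlinarith
    exact Nat.lt_succ_iff.mp (by exact_mod_cast this)
  · linarith
  · have : (R : ℝ) < 2 ^ k * m := by
      have : 4 * a * m < c * 2 ^ k * m := mul_lt_mul_of_pos_right hkc (by exact_mod_cast hm_pos)
      nlinarith
    exact_mod_cast this.le

theorem mean_value_inequality_in_the_large_general {V G : Type*} [Group G]
    (X : SimpleGraph V)
    (S : Finset G) (hSsym : ∀ s ∈ S, s⁻¹ ∈ S)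
    (hSgen : Subgroup.closure (S : Set G) = ⊤)
    (a b : ℝ) (ha : 1 ≤ a) (hb : 0 ≤ b)
    (φ : V → G) (hinj : Function.Injective φ)
    (hφ : IsRoughIsometryWith (fun x y => (X.dist x y : ℝ))
      (fun x y => (wordDist (S : Set G) x y : ℝ)) a b φ)
    -- (i) mean value inequality for harmonic functions on X
    (C₁ : ℝ) (hC₁ : 0 < C₁)
    (hMVIX : ∀ (u : V → ℝ), IsHarmonicGraph X u → ∀ (p : V) (R : ℕ), 1 ≤ R →
      (u p) ^ 2 ≤ C₁ / ({x : V | X.dist p x ≤ R}.ncard : ℝ) *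
        ∑ᶠ x ∈ {x : V | X.dist p x ≤ R}, (u x) ^ 2)
    -- (ii) volume comparison between balls in X and in G
    (C₁' C₂' : ℝ) (hC₁' : 0 < C₁') (hC₂' : 0 < C₂') (R₁ : ℕ)
    (hVC : ∀ (y : G) (p : V), (wordDist (S : Set G) (φ p) y : ℝ) ≤ b →
      ∀ R : ℕ, R₁ ≤ R →
      C₂' * ((wball (S : Set G) y ⌊C₁' * (R : ℝ)⌋₊).ncard : ℝ) ≤
        ({x : V | X.dist p x ≤ R}.ncard : ℝ))
    -- (iii) volume doubling on G
    (Cd : ℝ) (hCd : 0 < Cd)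
    (hdoubling : ∀ (y : G) (n : ℕ), 1 ≤ n →
      ((wball (S : Set G) y (2 * n)).ncard : ℝ) ≤ Cd * ((wball (S : Set G) y n).ncard : ℝ)) :
    ∃ (C : ℝ) (R₀ : ℕ), 0 < C ∧ 1 ≤ R₀ ∧
      ∀ (u : V → ℝ), IsHarmonicGraph X u → ∀ (y : G) (R : ℕ), R₀ ≤ R →
        (extendFun φ (S : Set G) b u y) ^ 2 ≤
          C / ((wball (S : Set G) y R).ncard : ℝ) *
            ∑ᶠ x ∈ wball (S : Set G) y R, (extendFun φ (S : Set G) b u x) ^ 2 := by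
  have hS := submonoid_closure_eq_top_of_inv_mem hSsym hSgen
  have hfin := S.finite_toSet
  obtain ⟨k, R₀, hR₀, hradius⟩ := exists_radius_scale (a := a) (by linarith) hb hC₁' R₁
  refine ⟨C₁ * Cd ^ k / C₂', R₀, by positivity, hR₀, fun u hu y R hR => ?_⟩
  obtain ⟨r, hR₁r, hr, hrR, hm, hRm⟩ := hradius R hR
  obtain ⟨p, hyp, hup⟩ := exists_sq_extendFun_le hS hfin hinj hb hφ.2 u y
  set BX := {x : V | X.dist p x ≤ r}
  set BG := wball (S : Set G) y R
  have hmaps : MapsTo φ BX BG :=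
    mapsTo_ball_wball hS (by linarith) (fun x x' => (hφ.1 x x').2) (by linarith)
  have hBG : (0 : ℝ) < BG.ncard := mod_cast ncard_wball_pos hS hfin y R
  have hvol : C₂' * BG.ncard ≤ Cd ^ k * BX.ncard :=
    calc C₂' * BG.ncard ≤ C₂' * (Cd ^ k * (wball (S : Set G) y ⌊C₁' * r⌋₊).ncard) := by
          gcongr; exact ncard_wball_le_pow_mul hS hfin hCd.le hdoubling y hm hRm
      _ = Cd ^ k * (C₂' * (wball (S : Set G) y ⌊C₁' * r⌋₊).ncard) := by ring
      _ ≤ Cd ^ k * BX.ncard := by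
          gcongr; exact hVC y p (by rwa [wordDist_comm hSsym]) r hR₁r
  have hBX : (0 : ℝ) < BX.ncard := by
    have : 0 < Cd ^ k * BX.ncard := lt_of_lt_of_le (by positivity) hvol
    exact pos_of_mul_pos_right this (by positivity)
  have hcoef : C₁ / BX.ncard ≤ C₁ * Cd ^ k / C₂' / BG.ncard := by
    rw [div_div, div_le_div_iff₀ hBX (by positivity)]
    nlinarith
  calc extendFun φ S b u y ^ 2 ≤ u p ^ 2 := hup
    _ ≤ C₁ / BX.ncard * ∑ᶠ x ∈ BX, u x ^ 2 := hMVIX u hu p r hr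
    _ ≤ C₁ * Cd ^ k / C₂' / BG.ncard * ∑ᶠ z ∈ BG, extendFun φ S b u z ^ 2 :=
      mul_le_mul hcoef (finsum_mem_sq_le_finsum_mem_sq_extendFun hinj u hmaps
        (wball_finite hS hfin y R)) (finsum_nonneg fun _ => finsum_nonneg fun _ => sq_nonneg _)
        (by positivity)

/-- Mean value inequality in the large for the extended function `ũ`. -/
theorem mean_value_inequality_in_the_large {V G : Type*} [Group G]
    (X : SimpleGraph V) (hconn : X.Connected) (Δ : ℕ) (hΔ : 2 ≤ Δ)
    (hdeg : ∀ v : V, (X.neighborSet v).ncard ≤ Δ)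
    (S : Finset G) (hSsym : ∀ s ∈ S, s⁻¹ ∈ S)
    (hSgen : Subgroup.closure (S : Set G) = ⊤)
    (D : ℕ) (c₁ c₂ : ℝ) (hc₁ : 0 < c₁) (hc₂ : 0 < c₂)
    (hpoly : ∀ n : ℕ, 1 ≤ n →
      c₁ * (n : ℝ) ^ D ≤ (growth (S : Set G) n : ℝ) ∧
      (growth (S : Set G) n : ℝ) ≤ c₂ * (n : ℝ) ^ D)
    (a b : ℝ) (ha : 1 ≤ a) (hb : 0 ≤ b)
    (φ : V → G) (hinj : Function.Injective φ)
    (hφ : IsRoughIsometryWith (fun x y => (X.dist x y : ℝ))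
      (fun x y => (wordDist (S : Set G) x y : ℝ)) a b φ)
    -- (i) mean value inequality for harmonic functions on X
    (C₁ : ℝ) (hC₁ : 0 < C₁)
    (hMVIX : ∀ (u : V → ℝ), IsHarmonicGraph X u → ∀ (p : V) (R : ℕ), 1 ≤ R →
      (u p) ^ 2 ≤ C₁ / ({x : V | X.dist p x ≤ R}.ncard : ℝ) *
        ∑ᶠ x ∈ {x : V | X.dist p x ≤ R}, (u x) ^ 2)
    -- (ii) volume comparison between balls in X and in G
    (C₁' C₂' : ℝ) (hC₁' : 0 < C₁') (hC₁'1 : C₁' < 1) (hC₂' : 0 < C₂') (R₁ : ℕ)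
    (hVC : ∀ (y : G) (p : V), (wordDist (S : Set G) (φ p) y : ℝ) ≤ b →
      ∀ R : ℕ, R₁ ≤ R →
      C₂' * ((wball (S : Set G) y ⌊C₁' * (R : ℝ)⌋₊).ncard : ℝ) ≤
        ({x : V | X.dist p x ≤ R}.ncard : ℝ))
    -- (iii) volume doubling on G
    (Cd : ℝ) (hCd : 0 < Cd)
    (hdoubling : ∀ (y : G) (n : ℕ), 1 ≤ n →
      ((wball (S : Set G) y (2 * n)).ncard : ℝ) ≤ Cd * ((wball (S : Set G) y n).ncard : ℝ)) :
    ∃ (C : ℝ) (R₀ : ℕ), 0 < C ∧ 1 ≤ R₀ ∧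
      ∀ (u : V → ℝ), IsHarmonicGraph X u → ∀ (y : G) (R : ℕ), R₀ ≤ R →
        (extendFun φ (S : Set G) b u y) ^ 2 ≤
          C / ((wball (S : Set G) y R).ncard : ℝ) *
            ∑ᶠ x ∈ wball (S : Set G) y R, (extendFun φ (S : Set G) b u x) ^ 2 :=
  mean_value_inequality_in_the_large_general X S hSsym hSgen a b ha hb φ hinj hφ C₁ hC₁ hMVIX C₁'
    C₂' hC₁' hC₂' R₁ hVC Cd hCd hdoubling
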